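/- arXiv:2401.11465 — 4 statements merged into one kernel-verified Lean document; each statement's English description precedes it below -/
import Mathlib

section
/- On [0,1]×[0,+∞], the operation (d1,m1)+(d2,m2) = (max(d1,d2), Σ_{i : d_i = max(d1,d2)} m_i) (i.e. (d2,m2) if d1 < d2, (d1,m1) if d2 < d1, and (d1, m1+m2) if d1 = d2) is commutative, associative, has identity element (0,0), and is continuous with respect to the order topology of the lexicographic order; hence ⟨[0,1]×[0,+∞]; +⟩ is a topological commutative monoid. -/
/- STATEMENT 1: On [0,1]×[0,+∞], the addition
   (d1,m1)+(d2,m2) = (d2,m2) if d1<d2, (d1,m1) if d2<d1, (d1,m1+m2) if d1=d2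
   is commutative, associative, has identity (0,0), and is continuous for the
   order topology of the lexicographic order: a topological commutative monoid. -/

open scoped ENNReal
open Topology

/-- The interval [0,1] as a subtype of ℝ. -/
abbrev UnitInterval' : Type := ↥(Set.Icc (0:ℝ) 1)

/-- The pair addition: the pair with the larger first coordinate wins; if the first
coordinates agree, the second coordinates are added. -/
noncomputable def pAdd {α β : Type*} [LinearOrder α] [Add β] (a b : α × β) : α × β :=
  if a.1 < b.1 then b else if b.1 < a.1 then a else (a.1, a.2 + b.2)

/-- The pair (0,0) in [0,1]×[0,+∞]. -/
noncomputable def pZero : UnitInterval' × ℝ≥0∞ := (⟨0, by norm_num⟩, 0)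

/-- The order topology on [0,1]×[0,+∞] with the lexicographic order. -/
noncomputable instance : TopologicalSpace (Lex (UnitInterval' × ℝ≥0∞)) :=
  Preorder.topology _

/-! Commutativity and associativity are a case analysis on the order of the first coordinates.
For continuity it suffices that every strict lexicographic bound of `a + b` persists near
`(a, b)`. A lower bound lying below `a` or `b` persists because `a, b ≤ a + b`. Otherwise `a`,
`b` and the bound `(d, m)` share the first coordinate `d`, and since addition on `[0, ∞]` is
continuous one finds `(d, p) < a`, `(d, q) < b` with `m ≤ p + q`; every sum of points above
`(d, p)` and `(d, q)` lies above `(d, p + q)`. Upper bounds are handled dually. -/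

open Filter Prod.Lex

section Algebra

variable {α β : Type*} [LinearOrder α]

theorem pAdd_of_lt [Add β] {a b : α × β} (h : a.1 < b.1) : pAdd a b = b := if_pos h

theorem pAdd_of_gt [Add β] {a b : α × β} (h : b.1 < a.1) : pAdd a b = a := by
  rw [pAdd, if_neg h.not_gt, if_pos h]

theorem pAdd_of_eq [Add β] {a b : α × β} (h : a.1 = b.1) : pAdd a b = (a.1, a.2 + b.2) := by
  rw [pAdd, if_neg h.not_lt, if_neg h.not_gt]

theorem fst_pAdd [Add β] (a b : α × β) : (pAdd a b).1 = max a.1 b.1 := by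
  unfold pAdd; split_ifs <;> grind

theorem pAdd_comm [AddCommMagma β] (a b : α × β) : pAdd a b = pAdd b a := by
  unfold pAdd; split_ifs <;> grind [add_comm]

theorem pAdd_assoc [AddSemigroup β] (a b c : α × β) :
    pAdd (pAdd a b) c = pAdd a (pAdd b c) := by
  unfold pAdd; split_ifs <;> grind [add_assoc]

theorem pAdd_eq_left_of_fst_le [AddZeroClass β] {a b : α × β} (h : b.1 ≤ a.1) (hb : b.2 = 0) :
    pAdd a b = a := by
  rcases h.lt_or_eq with h | h
  · exact pAdd_of_gt h
  · rw [pAdd_of_eq h.symm, hb, add_zero]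

end Algebra

section LexOrder

variable {α β : Type*} [LinearOrder α]

theorem toLex_le_toLex_pAdd_left [AddCommMonoid β] [PartialOrder β] [CanonicallyOrderedAdd β]
    (a b : α × β) : toLex a ≤ toLex (pAdd a b) := by
  rcases lt_trichotomy a.1 b.1 with h | h | h
  · rw [pAdd_of_lt h]; exact toLex_le_toLex.2 (.inl h)
  · rw [pAdd_of_eq h]; exact toLex_le_toLex.2 (.inr ⟨rfl, le_self_add⟩)
  · rw [pAdd_of_gt h]

theorem toLex_le_toLex_pAdd_right [AddCommMonoid β] [PartialOrder β] [CanonicallyOrderedAdd β]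
    (a b : α × β) : toLex b ≤ toLex (pAdd a b) :=
  pAdd_comm a b ▸ toLex_le_toLex_pAdd_left b a

theorem eq_of_toLex_le_of_lt_pAdd [Add β] [Preorder β] {a b c : α × β}
    (ha : toLex a ≤ toLex c) (hb : toLex b ≤ toLex c) (h : toLex c < toLex (pAdd a b)) :
    a.1 = c.1 ∧ b.1 = c.1 ∧ c.2 < a.2 + b.2 := by
  rcases lt_trichotomy a.1 b.1 with hab | hab | hab
  · rw [pAdd_of_lt hab] at h; exact absurd h hb.not_gt
  · rw [pAdd_of_eq hab] at h
    have hac : a.1 = c.1 :=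
      (monotone_fst _ _ ha).antisymm (monotone_fst _ (toLex (a.1, a.2 + b.2)) h.le)
    rcases toLex_lt_toLex.1 h with hca | ⟨-, hca⟩
    · exact absurd hca (hac ▸ lt_irrefl _)
    · exact ⟨hac, hab ▸ hac, hca⟩
  · rw [pAdd_of_gt hab] at h; exact absurd h ha.not_gt

end LexOrder

section ENNReal

variable {α : Type*} [LinearOrder α] {d : α} {m p q : ℝ≥0∞} {a b : α × ℝ≥0∞}

theorem toLex_add_lt_toLex_pAdd (ha : toLex (d, p) < toLex a) (hb : toLex (d, q) < toLex b) :
    toLex (d, p + q) < toLex (pAdd a b) := by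
  rcases toLex_lt_toLex.1 ha with hda | ⟨hda, hpa⟩
  · exact (toLex_lt_toLex (x := (d, p + q)).2 (.inl hda)).trans_le
      (toLex_le_toLex_pAdd_left a b)
  rcases toLex_lt_toLex.1 hb with hdb | ⟨hdb, hqb⟩
  · exact (toLex_lt_toLex (x := (d, p + q)).2 (.inl hdb)).trans_le
      (toLex_le_toLex_pAdd_right a b)
  rw [pAdd_of_eq (hda.symm.trans hdb)]
  exact toLex_lt_toLex.2 (.inr ⟨hda, ENNReal.add_lt_add hpa hqb⟩)

theorem toLex_pAdd_lt_toLex_add (ha : toLex a < toLex (d, p)) (hb : toLex b < toLex (d, q)) :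
    toLex (pAdd a b) < toLex (d, p + q) := by
  rcases toLex_lt_toLex.1 ha with had | ⟨had, hap⟩ <;>
    rcases toLex_lt_toLex.1 hb with hbd | ⟨hbd, hbq⟩
  · exact toLex_lt_toLex.2 (.inl (fst_pAdd a b ▸ max_lt had hbd))
  · rw [pAdd_of_lt (had.trans_eq hbd.symm)]
    exact hb.trans_le (toLex_le_toLex.2 (.inr ⟨rfl, le_add_self⟩))
  · rw [pAdd_of_gt (hbd.trans_eq had.symm)]
    exact ha.trans_le (toLex_le_toLex.2 (.inr ⟨rfl, le_self_add⟩))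
  · rw [pAdd_of_eq (had.trans hbd.symm)]
    exact toLex_lt_toLex.2 (.inr ⟨had, ENNReal.add_lt_add hap hbq⟩)

theorem exists_toLex_lt_of_lt_toLex_pAdd (ha : toLex a ≤ toLex (d, m))
    (hb : toLex b ≤ toLex (d, m)) (h : toLex (d, m) < toLex (pAdd a b)) :
    ∃ p q, toLex (d, p) < toLex a ∧ toLex (d, q) < toLex b ∧ m ≤ p + q := by
  obtain ⟨had, hbd, hm⟩ := eq_of_toLex_le_of_lt_pAdd ha hb h
  have ham : a.2 ≤ m := ((toLex_le_toLex.1 ha).resolve_left (had ▸ lt_irrefl _)).2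
  have hbm : b.2 ≤ m := ((toLex_le_toLex.1 hb).resolve_left (hbd ▸ lt_irrefl _)).2
  have ha0 : a.2 ≠ 0 := fun h0 => (hm.trans_le (by rw [h0, zero_add]; exact hbm)).false
  have hb0 : b.2 ≠ 0 := fun h0 => (hm.trans_le (by rw [h0, add_zero]; exact ham)).false
  obtain ⟨p, hp, q, hq, hpq⟩ := ENNReal.exists_lt_add_of_lt_add hm ha0 hb0
  exact ⟨p, q, toLex_lt_toLex.2 (.inr ⟨had.symm, hp⟩), toLex_lt_toLex.2 (.inr ⟨hbd.symm, hq⟩),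
    hpq.le⟩

theorem exists_lt_toLex_of_toLex_pAdd_lt (h : toLex (pAdd a b) < toLex (d, m)) :
    ∃ p q, toLex a < toLex (d, p) ∧ toLex b < toLex (d, q) ∧ p + q ≤ m := by
  wlog hab : a.1 ≤ b.1 generalizing a b
  · obtain ⟨p, q, hb, ha, hpq⟩ := this (pAdd_comm a b ▸ h) (le_of_not_ge hab)
    exact ⟨q, p, ha, hb, add_comm p q ▸ hpq⟩
  rcases hab.lt_or_eq with hab | hab
  · rw [pAdd_of_lt hab] at h
    exact ⟨0, m, toLex_lt_toLex.2 (.inl (hab.trans_le (monotone_fst _ (toLex (d, m)) h.le))), h,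
      by rw [zero_add]⟩
  rw [pAdd_of_eq hab] at h
  rcases toLex_lt_toLex.1 h with had | ⟨had, habm⟩
  · exact ⟨0, 0, toLex_lt_toLex.2 (.inl had), toLex_lt_toLex.2 (.inl (hab ▸ had)), by simp⟩
  obtain ⟨p, hp, q, hq, hpq⟩ := ENNReal.exists_add_lt_of_add_lt habm
  exact ⟨p, q, toLex_lt_toLex.2 (.inr ⟨had, hp⟩), toLex_lt_toLex.2 (.inr ⟨hab ▸ had, hq⟩), hpq.le⟩

end ENNReal

section Continuity

variable {α : Type*} [LinearOrder α]
variable [TopologicalSpace (Lex (α × ℝ≥0∞))] [OrderTopology (Lex (α × ℝ≥0∞))]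

theorem eventually_lt_toLex_pAdd {x y c : Lex (α × ℝ≥0∞)}
    (h : c < toLex (pAdd (ofLex x) (ofLex y))) :
    ∀ᶠ z in 𝓝 (x, y), c < toLex (pAdd (ofLex z.1) (ofLex z.2)) := by
  rw [nhds_prod_eq]
  by_cases hx : c < x
  · exact ((eventually_gt_nhds hx).prod_inl _).mono fun z hz =>
      hz.trans_le (toLex_le_toLex_pAdd_left _ _)
  by_cases hy : c < y
  · exact ((eventually_gt_nhds hy).prod_inr _).mono fun z hz =>
      hz.trans_le (toLex_le_toLex_pAdd_right _ _)
  obtain ⟨⟨d, m⟩, rfl⟩ := toLex.surjective c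
  obtain ⟨p, q, hp, hq, hm⟩ := exists_toLex_lt_of_lt_toLex_pAdd (not_lt.1 hx) (not_lt.1 hy) h
  have hdm : toLex (d, m) ≤ toLex (d, p + q) := toLex_le_toLex.2 (.inr ⟨rfl, hm⟩)
  exact ((eventually_gt_nhds hp).prod_mk (eventually_gt_nhds hq)).mono fun z hz =>
    hdm.trans_lt (toLex_add_lt_toLex_pAdd hz.1 hz.2)

theorem eventually_toLex_pAdd_lt {x y c : Lex (α × ℝ≥0∞)}
    (h : toLex (pAdd (ofLex x) (ofLex y)) < c) :
    ∀ᶠ z in 𝓝 (x, y), toLex (pAdd (ofLex z.1) (ofLex z.2)) < c := by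
  obtain ⟨⟨d, m⟩, rfl⟩ := toLex.surjective c
  obtain ⟨p, q, hp, hq, hm⟩ := exists_lt_toLex_of_toLex_pAdd_lt h
  rw [nhds_prod_eq]
  exact ((eventually_lt_nhds hp).prod_mk (eventually_lt_nhds hq)).mono fun z hz =>
    (toLex_pAdd_lt_toLex_add hz.1 hz.2).trans_le (toLex_le_toLex.2 (.inr ⟨rfl, hm⟩))

theorem continuous_pAdd :
    Continuous fun z : Lex (α × ℝ≥0∞) × Lex (α × ℝ≥0∞) => toLex (pAdd (ofLex z.1) (ofLex z.2)) :=
  continuous_iff_continuousAt.2 fun _ =>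
    tendsto_order.2 ⟨fun _ => eventually_lt_toLex_pAdd, fun _ => eventually_toLex_pAdd_lt⟩

end Continuity

theorem pAdd_topological_commutative_monoid :
    (∀ a b : UnitInterval' × ℝ≥0∞, pAdd a b = pAdd b a) ∧
    (∀ a b c : UnitInterval' × ℝ≥0∞, pAdd (pAdd a b) c = pAdd a (pAdd b c)) ∧
    (∀ a : UnitInterval' × ℝ≥0∞, pAdd a pZero = a ∧ pAdd pZero a = a) ∧
    Continuous (fun p : Lex (UnitInterval' × ℝ≥0∞) × Lex (UnitInterval' × ℝ≥0∞) =>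
      toLex (pAdd (ofLex p.1) (ofLex p.2))) := by
  have pAdd_pZero (a : UnitInterval' × ℝ≥0∞) : pAdd a pZero = a :=
    pAdd_eq_left_of_fst_le a.1.2.1 rfl
  have : OrderTopology (Lex (UnitInterval' × ℝ≥0∞)) := ⟨rfl⟩
  exact ⟨pAdd_comm, pAdd_assoc, fun a => ⟨pAdd_pZero a, pAdd_comm a pZero ▸ pAdd_pZero a⟩,
    continuous_pAdd⟩
end

section
/- Let K ⊆ ℝ be Borel. If f, g : K → ℝ are Hausdorff-integrable and 0 ≤ f, 0 ≤ g, then f + g is Hausdorff-integrable and (H)∫_K (f+g) = (H)∫_K f + (H)∫_K g, where the sum on the right is the pair addition. -/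
open MeasureTheory Filter Topology
open scoped ENNReal

/-- D_f^L = {x ∈ L : f(x) ≠ 0}. -/
def HD (L : Set ℝ) (f : ℝ → ℝ) : Set ℝ := {x ∈ L | f x ≠ 0}

/-- The Hausdorff dimension of D_f^L. -/
noncomputable def Hdim (L : Set ℝ) (f : ℝ → ℝ) : ℝ≥0∞ := dimH (HD L f)

/-- ∫_{D_f^L} f⁺ dμ^d, where d = dim_H D_f^L. -/
noncomputable def HIntPos (L : Set ℝ) (f : ℝ → ℝ) : ℝ≥0∞ :=
  ∫⁻ x in HD L f, ENNReal.ofReal (f x) ∂(μH[(Hdim L f).toReal])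

/-- ∫_{D_f^L} f⁻ dμ^d, where d = dim_H D_f^L. -/
noncomputable def HIntNeg (L : Set ℝ) (f : ℝ → ℝ) : ℝ≥0∞ :=
  ∫⁻ x in HD L f, ENNReal.ofReal (-f x) ∂(μH[(Hdim L f).toReal])

/-- The extended-real integral ∫_{D_f^L} f dμ^d exists (is not ∞ − ∞). -/
def HIntExists (L : Set ℝ) (f : ℝ → ℝ) : Prop := HIntPos L f ≠ ⊤ ∨ HIntNeg L f ≠ ⊤

/-- f is Hausdorff-integrable on L: the integral exists and is finite. -/
def HIntegrable (L : Set ℝ) (f : ℝ → ℝ) : Prop := HIntPos L f ≠ ⊤ ∧ HIntNeg L f ≠ ⊤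

/-- The value ∫_{D_f^L} f dμ^d ∈ [-∞,+∞]. -/
noncomputable def HIntVal (L : Set ℝ) (f : ℝ → ℝ) : EReal :=
  (HIntPos L f : EReal) - (HIntNeg L f : EReal)

/-- The Hausdorff integral (H)∫_L f = (dim_H D_f^L, ∫_{D_f^L} f dμ^{dim_H D_f^L}). -/
noncomputable def HInt (L : Set ℝ) (f : ℝ → ℝ) : ℝ≥0∞ × EReal := (Hdim L f, HIntVal L f)

/-! On `K` the integrand `ofReal ∘ f` already vanishes off `D_f`, so each positive part may be
integrated over all of `K`, where it is additive for `f, g ≥ 0`. Since `D_{f+g} = D_f ∪ D_g`, the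
dimension of `f + g` is the larger dimension `d`, and the `μ^d`-integral of a summand of smaller
dimension vanishes because `μ^d` is null on sets of dimension `< d`: this is the pair addition. -/

lemma pAdd_mk_eq_max {α β : Type*} [LinearOrder α] [AddZeroClass β] {a b : α} (u v : α → β)
    (hu : a < b → u b = 0) (hv : b < a → v a = 0) :
    pAdd (a, u a) (b, v b) = (max a b, u (max a b) + v (max a b)) := by
  unfold pAdd
  split_ifs with hab hba
  · simp [max_eq_right hab.le, hu hab]
  · simp [max_eq_left hba.le, hv hba]
  · obtain rfl : a = b := le_antisymm (not_lt.1 hba) (not_lt.1 hab)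
    simp

lemma hausdorffMeasure_toReal_eq_zero_of_dimH_lt {X : Type*} [EMetricSpace X] [MeasurableSpace X]
    [BorelSpace X] {s : Set X} {d : ℝ≥0∞} (hd : dimH s < d) (hd_top : d ≠ ⊤) :
    μH[d.toReal] s = 0 :=
  hausdorffMeasure_of_dimH_lt (d := d.toNNReal) (by rwa [ENNReal.coe_toNNReal hd_top])

noncomputable def HIntPosAt (L : Set ℝ) (f : ℝ → ℝ) (d : ℝ≥0∞) : ℝ≥0∞ :=
  ∫⁻ x in L, ENNReal.ofReal (f x) ∂μH[d.toReal]

section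

variable {K : Set ℝ} {f g : ℝ → ℝ}

lemma HD_add_of_nonneg (hf0 : ∀ x ∈ K, 0 ≤ f x) (hg0 : ∀ x ∈ K, 0 ≤ g x) :
    HD K (fun x => f x + g x) = HD K f ∪ HD K g := by
  ext x
  by_cases hx : x ∈ K
  · simp [HD, hx, add_eq_zero_iff_of_nonneg (hf0 x hx) (hg0 x hx), imp_iff_not_or]
  · simp [HD, hx]

lemma Hdim_add_of_nonneg (hf0 : ∀ x ∈ K, 0 ≤ f x) (hg0 : ∀ x ∈ K, 0 ≤ g x) :
    Hdim K (fun x => f x + g x) = max (Hdim K f) (Hdim K g) := by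
  rw [Hdim, HD_add_of_nonneg hf0 hg0, dimH_union, Hdim, Hdim]

lemma setLIntegral_HD_ofReal (hf : Measurable f) (μ : Measure ℝ) :
    ∫⁻ x in HD K f, ENNReal.ofReal (f x) ∂μ = ∫⁻ x in K, ENNReal.ofReal (f x) ∂μ := by
  have hHD : HD K f = f ⁻¹' {0}ᶜ ∩ K := by
    ext x
    simp [HD, and_comm]
  rw [hHD, ← Measure.restrict_restrict (hf (measurableSet_singleton 0).compl)]
  refine setLIntegral_eq_of_support_subset fun x hx => ?_
  rintro (h0 : f x = 0)
  simp [h0] at hx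

lemma HIntPos_eq_HIntPosAt (hf : Measurable f) : HIntPos K f = HIntPosAt K f (Hdim K f) :=
  setLIntegral_HD_ofReal hf _

lemma HIntPosAt_eq_zero_of_Hdim_lt (hf : Measurable f) {d : ℝ≥0∞} (hd : Hdim K f < d)
    (hd_top : d ≠ ⊤) : HIntPosAt K f d = 0 := by
  rw [HIntPosAt, ← setLIntegral_HD_ofReal hf]
  exact setLIntegral_measure_zero _ _ (hausdorffMeasure_toReal_eq_zero_of_dimH_lt hd hd_top)

lemma HIntPosAt_le_HIntPos (hf : Measurable f) {d : ℝ≥0∞} (hd : Hdim K f ≤ d)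
    (hd_top : d ≠ ⊤) : HIntPosAt K f d ≤ HIntPos K f := by
  rcases hd.lt_or_eq with hlt | rfl
  · rw [HIntPosAt_eq_zero_of_Hdim_lt hf hlt hd_top]
    exact zero_le
  · rw [HIntPos_eq_HIntPosAt hf]

lemma HIntPosAt_add (hK : MeasurableSet K) (hf : Measurable f) (hf0 : ∀ x ∈ K, 0 ≤ f x)
    (hg0 : ∀ x ∈ K, 0 ≤ g x) (d : ℝ≥0∞) :
    HIntPosAt K (fun x => f x + g x) d = HIntPosAt K f d + HIntPosAt K g d := by
  rw [HIntPosAt, HIntPosAt, HIntPosAt, ← lintegral_add_left hf.ennreal_ofReal]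
  exact setLIntegral_congr_fun hK fun x hx => ENNReal.ofReal_add (hf0 x hx) (hg0 x hx)

lemma HIntNeg_eq_zero_of_nonneg (hK : MeasurableSet K) (hf0 : ∀ x ∈ K, 0 ≤ f x) :
    HIntNeg K f = 0 := by
  refine le_zero_iff.1 ?_
  calc HIntNeg K f ≤ ∫⁻ x in K, ENNReal.ofReal (-f x) ∂μH[(Hdim K f).toReal] :=
        lintegral_mono_set fun x hx => hx.1
    _ = 0 := setLIntegral_eq_zero hK fun x hx => by simpa using hf0 x hx

lemma HInt_eq_of_nonneg (hK : MeasurableSet K) (hf0 : ∀ x ∈ K, 0 ≤ f x) :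
    HInt K f = (Hdim K f, (HIntPos K f : EReal)) := by
  simp [HInt, HIntVal, HIntNeg_eq_zero_of_nonneg hK hf0]

end

theorem hInt_add_of_nonneg (K : Set ℝ) (f g : ℝ → ℝ)
    (hK : MeasurableSet K) (hf : Measurable f) (hg : Measurable g)
    (hf0 : ∀ x ∈ K, 0 ≤ f x) (hg0 : ∀ x ∈ K, 0 ≤ g x)
    (hfi : HIntegrable K f) (hgi : HIntegrable K g) :
    HIntegrable K (fun x => f x + g x) ∧
    HInt K (fun x => f x + g x) = pAdd (HInt K f) (HInt K g) := by
  set m := max (Hdim K f) (Hdim K g)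
  have hdim : Hdim K (fun x => f x + g x) = m := Hdim_add_of_nonneg hf0 hg0
  have hm : m ≠ ⊤ := hdim ▸ Real.dimH_ne_top _
  have hpos : HIntPos K (fun x => f x + g x) = HIntPosAt K f m + HIntPosAt K g m := by
    rw [HIntPos_eq_HIntPosAt (f := fun x => f x + g x) (hf.add hg), hdim,
      HIntPosAt_add hK hf hf0 hg0]
  have hfg0 : ∀ x ∈ K, 0 ≤ f x + g x := fun x hx => add_nonneg (hf0 x hx) (hg0 x hx)
  refine ⟨⟨?_, ?_⟩, ?_⟩
  · rw [hpos]
    exact ENNReal.add_ne_top.2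
      ⟨ne_top_of_le_ne_top hfi.1 (HIntPosAt_le_HIntPos hf le_sup_left hm),
        ne_top_of_le_ne_top hgi.1 (HIntPosAt_le_HIntPos hg le_sup_right hm)⟩
  · rw [HIntNeg_eq_zero_of_nonneg hK hfg0]
    exact ENNReal.zero_ne_top
  · rw [HInt_eq_of_nonneg hK hfg0, HInt_eq_of_nonneg hK hf0, HInt_eq_of_nonneg hK hg0, hpos, hdim,
      HIntPos_eq_HIntPosAt hf, HIntPos_eq_HIntPosAt hg, EReal.coe_ennreal_add]
    exact (pAdd_mk_eq_max (fun d => (HIntPosAt K f d : EReal)) (fun d => (HIntPosAt K g d : EReal))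
      (fun h => by simp [HIntPosAt_eq_zero_of_Hdim_lt hf h (Real.dimH_ne_top _)])
      (fun h => by simp [HIntPosAt_eq_zero_of_Hdim_lt hg h (Real.dimH_ne_top _)])).symm
end

section
/- Define d_s(A,B) = μ^H(A △ B) for A, B ⊆ ℝ, where A △ B is the symmetric difference. Then d_s is an h-metric on the power set of ℝ: d_s(A,B) = (0,0) iff A = B; d_s(A,B) = d_s(B,A); and d_s(A,C) ≤ d_s(A,B) + d_s(B,C) for all A, B, C ⊆ ℝ, where ≤ is the lexicographic order and + is the pair addition. -/
open MeasureTheory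
open scoped ENNReal symmDiff

/-- μ^H(K) = (dim_H K, μ^{dim_H K}(K)). -/
noncomputable def muH (A : Set ℝ) : ℝ≥0∞ × ℝ≥0∞ :=
  (dimH A, μH[(dimH A).toReal] A)

/-- d_s(A,B) = μ^H(A △ B). -/
noncomputable def dS (A B : Set ℝ) : ℝ≥0∞ × ℝ≥0∞ := muH (A ∆ B)

/-!
`μ^H` is monotone for inclusion and satisfies `μ^H(s ∪ t) ≤ μ^H(s) + μ^H(t)`: the dimension of
a union is the larger of the two dimensions, and a set of dimension strictly below `d` is
`μ^d`-null, so it does not contribute to the measure of the union; when both dimensions agree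
this is subadditivity of `μ^d`. The triangle inequality then follows from
`A △ C ⊆ (A △ B) ∪ (B △ C)`, and `μ^H(K) = (0, 0)` forces `K = ∅` because `μ^0` is the
counting measure.
-/

section HausdorffMeasure

variable {X : Type*} [EMetricSpace X] [MeasurableSpace X] [BorelSpace X]

lemma hausdorffMeasure_toReal_of_dimH_lt {s : Set X} {d : ℝ≥0∞} (h : dimH s < d) (hd : d ≠ ∞) :
    μH[d.toReal] s = 0 := by
  lift d to NNReal using hd
  exact hausdorffMeasure_of_dimH_lt h

lemma hausdorffMeasure_union_of_dimH_lt {s : Set X} {d : ℝ≥0∞} (h : dimH s < d) (hd : d ≠ ∞)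
    (t : Set X) : μH[d.toReal] (s ∪ t) = μH[d.toReal] t := by
  refine le_antisymm ?_ (measure_mono Set.subset_union_right)
  calc μH[d.toReal] (s ∪ t) ≤ μH[d.toReal] s + μH[d.toReal] t := measure_union_le s t
    _ = μH[d.toReal] t := by rw [hausdorffMeasure_toReal_of_dimH_lt h hd, zero_add]

end HausdorffMeasure

lemma muH_eq_zero_iff {s : Set ℝ} : muH s = (0, 0) ↔ s = ∅ := by
  refine ⟨fun h => ?_, fun h => by simp [muH, h]⟩
  have hdim : dimH s = 0 := congrArg Prod.fst h
  have hcount : μH[0] s = 0 := by simpa [muH, hdim] using congrArg Prod.snd h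
  by_contra hne
  simpa [hcount] using
    Measure.one_le_hausdorffMeasure_zero_of_nonempty (Set.nonempty_iff_ne_empty.2 hne)

lemma muH_mono {s t : Set ℝ} (h : s ⊆ t) : toLex (muH s) ≤ toLex (muH t) := by
  refine Prod.Lex.toLex_le_toLex'.2 ⟨dimH_mono h, fun hdim => ?_⟩
  change μH[(dimH s).toReal] s ≤ μH[(dimH t).toReal] t
  rw [show dimH s = dimH t from hdim]
  exact measure_mono h

lemma muH_union_of_dimH_lt {s t : Set ℝ} (h : dimH s < dimH t) : muH (s ∪ t) = muH t := by
  rw [muH, muH, dimH_union, max_eq_right h.le,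
    hausdorffMeasure_union_of_dimH_lt h (Real.dimH_ne_top t)]

lemma muH_union_le_pAdd (s t : Set ℝ) : toLex (muH (s ∪ t)) ≤ toLex (pAdd (muH s) (muH t)) := by
  unfold pAdd
  split_ifs with hst hts
  · rw [muH_union_of_dimH_lt hst]
  · rw [Set.union_comm, muH_union_of_dimH_lt hts]
  · have hdim : dimH s = dimH t := le_antisymm (not_lt.1 hts) (not_lt.1 hst)
    have hunion : dimH (s ∪ t) = dimH s := by rw [dimH_union, hdim, max_self]
    refine Prod.Lex.toLex_le_toLex.2 (Or.inr ⟨hunion, ?_⟩)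
    change μH[(dimH (s ∪ t)).toReal] (s ∪ t) ≤ μH[(dimH s).toReal] s + μH[(dimH t).toReal] t
    rw [hunion, ← hdim]
    exact measure_union_le s t

theorem dS_is_h_metric :
    (∀ A B : Set ℝ, dS A B = (0, 0) ↔ A = B) ∧
    (∀ A B : Set ℝ, dS A B = dS B A) ∧
    (∀ A B C : Set ℝ, toLex (dS A C) ≤ toLex (pAdd (dS A B) (dS B C))) := by
  refine ⟨fun A B => ?_, fun A B => ?_, fun A B C => ?_⟩
  · rw [dS, muH_eq_zero_iff, ← Set.bot_eq_empty, symmDiff_eq_bot]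
  · rw [dS, dS, symmDiff_comm]
  · exact (muH_mono (symmDiff_triangle A B C)).trans (muH_union_le_pAdd _ _)
end

section
/- (Riesz-Fischer analog.) Let K ⊆ ℝ be Borel. The h-metric space ⟨L_H(K), d_H⟩ is complete: for every sequence (f_n) in L_H(K) that is Cauchy (for every ε > 0 there is N such that for all n, m > N, d_H(f_n,f_m) < (0,ε) in the lexicographic order, i.e. dim_H D_{|f_n−f_m|} = 0 and ∫ |f_n−f_m| dμ^0 < ε), there exists f ∈ L_H(K) with d_H(f_n, f) → (0,0), i.e. for every ε > 0 eventually d_H(f_n,f) < (0,ε). -/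
open MeasureTheory Filter Topology
open scoped ENNReal

/-- f ∈ L_H(K): f is Borel measurable and |f| is Hausdorff-integrable on K. -/
def MemLH (K : Set ℝ) (f : ℝ → ℝ) : Prop :=
  Measurable f ∧ HIntegrable K (fun x => |f x|)

/-- d_H(f,g) = (H)∫_K |f − g|. -/
noncomputable def dLH (K : Set ℝ) (f g : ℝ → ℝ) : ℝ≥0∞ × EReal :=
  HInt K (fun x => |f x - g x|)

/-!
Distances below `(0, ε)` only occur between functions that differ on a set of Hausdorff
dimension `0`, and are then integrals against the counting measure `μH[0]`. Since `μH[0]` gives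
mass `1` to every point, a `d_H`-Cauchy sequence is uniformly Cauchy on `K`; its pointwise limit
`g` is the `d_H`-limit by Fatou's lemma, and the exceptional sets stay of dimension `0` as a
countable union. Finally `g` differs from some `fₙ` only on a set `E` of dimension `0`, so
`D_g` and `D_{fₙ}` have the same dimension `d`: for `d = 0` the integral of `|g|` is bounded by
those of `|fₙ|` and `|fₙ - g|`, and for `d > 0` the set `E` is `μH[d]`-null.
-/

open scoped NNReal

lemma le_setLIntegral_hausdorffMeasure_zero {X : Type*} [EMetricSpace X] [MeasurableSpace X]
    [BorelSpace X] {K : Set X} {x : X} (hx : x ∈ K) (φ : X → ℝ≥0∞) :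
    φ x ≤ ∫⁻ y in K, φ y ∂μH[0] :=
  calc φ x = ∫⁻ y in {x}, φ y ∂μH[0] := by simp
    _ ≤ ∫⁻ y in K, φ y ∂μH[0] := lintegral_mono_set (Set.singleton_subset_iff.2 hx)

lemma setLIntegral_le_of_tendsto {X : Type*} [MeasurableSpace X] {μ : Measure X} {K : Set X}
    (hK : MeasurableSet K) {F : ℕ → X → ℝ≥0∞} {G : X → ℝ≥0∞} (hF : ∀ m, Measurable (F m))
    (hlim : ∀ x ∈ K, Tendsto (F · x) atTop (𝓝 (G x))) {c : ℝ≥0∞}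
    (hc : ∀ᶠ m in atTop, ∫⁻ x in K, F m x ∂μ ≤ c) :
    ∫⁻ x in K, G x ∂μ ≤ c :=
  calc ∫⁻ x in K, G x ∂μ = ∫⁻ x in K, liminf (F · x) atTop ∂μ :=
        setLIntegral_congr_fun hK fun x hx => (hlim x hx).liminf_eq.symm
    _ ≤ liminf (fun m => ∫⁻ x in K, F m x ∂μ) atTop := lintegral_liminf_le hF
    _ ≤ c := liminf_le_of_frequently_le' hc.frequently

lemma dimH_le_of_subset_union {X : Type*} [EMetricSpace X] {s t E : Set X} (hst : s ⊆ t ∪ E)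
    (hE : dimH E = 0) : dimH s ≤ dimH t :=
  calc dimH s ≤ dimH (t ∪ E) := dimH_mono hst
    _ = dimH t := by rw [dimH_union, hE, max_eq_left zero_le]

section HausdorffIntegral

variable {K : Set ℝ}

lemma HD_subset (F : ℝ → ℝ) : HD K F ⊆ K := fun _ hx => hx.1

lemma HD_abs (f : ℝ → ℝ) : HD K (fun x => |f x|) = HD K f := by
  simp only [HD, ne_eq, abs_eq_zero]

lemma HD_subset_union_HD_sub (f g : ℝ → ℝ) :
    HD K g ⊆ HD K f ∪ HD K (fun x => f x - g x) := by
  rintro x ⟨hxK, hgx⟩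
  by_cases hfx : f x = 0
  · exact Or.inr ⟨hxK, by simpa [hfx] using hgx⟩
  · exact Or.inl ⟨hxK, hfx⟩

lemma HD_sub_comm (f g : ℝ → ℝ) :
    HD K (fun x => g x - f x) = HD K (fun x => f x - g x) := by
  simp only [HD, ne_eq, sub_eq_zero, eq_comm]

lemma measurableSet_HD (hK : MeasurableSet K) {F : ℝ → ℝ} (hF : Measurable F) :
    MeasurableSet (HD K F) :=
  hK.inter (hF (measurableSet_singleton 0).compl)

lemma setLIntegral_HD (hK : MeasurableSet K) {F : ℝ → ℝ} (hF : Measurable F) (μ : Measure ℝ) :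
    ∫⁻ x in HD K F, ENNReal.ofReal (F x) ∂μ = ∫⁻ x in K, ENNReal.ofReal (F x) ∂μ := by
  rw [← lintegral_inter_add_sdiff _ K (measurableSet_HD hK hF),
    Set.inter_eq_right.2 (HD_subset F),
    setLIntegral_eq_zero (hK.diff (measurableSet_HD hK hF)), add_zero]
  intro x hx
  have hFx : F x = 0 := by_contra fun h => hx.2 ⟨hx.1, h⟩
  simp [hFx]

lemma setLIntegral_hausdorffMeasure_eq_zero_of_dimH_lt (hK : MeasurableSet K) {F : ℝ → ℝ}
    (hF : Measurable F) {d : ℝ≥0} (hd : dimH (HD K F) < d) :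
    ∫⁻ x in K, ENNReal.ofReal (F x) ∂μH[d] = 0 := by
  rw [← setLIntegral_HD hK hF]
  exact setLIntegral_measure_zero _ _ (hausdorffMeasure_of_dimH_lt hd)

lemma HIntNeg_eq_zero {F : ℝ → ℝ} (hF : 0 ≤ F) : HIntNeg K F = 0 := by
  simp [HIntNeg, ENNReal.ofReal_of_nonpos (neg_nonpos.2 (hF _))]

lemma HIntPos_eq_setLIntegral (hK : MeasurableSet K) {F : ℝ → ℝ} (hF : Measurable F) :
    HIntPos K F = ∫⁻ x in K, ENNReal.ofReal (F x) ∂μH[(Hdim K F).toReal] :=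
  setLIntegral_HD hK hF _

lemma toLex_HInt_lt_iff (hK : MeasurableSet K) {F : ℝ → ℝ} (hF : Measurable F) (hF0 : 0 ≤ F)
    {ε : ℝ} (hε : 0 ≤ ε) :
    toLex (HInt K F) < toLex ((0 : ℝ≥0∞), (ε : EReal)) ↔
      dimH (HD K F) = 0 ∧ ∫⁻ x in K, ENNReal.ofReal (F x) ∂μH[0] < ENNReal.ofReal ε := by
  rw [Prod.Lex.toLex_lt_toLex]
  simp only [HInt, Hdim, not_lt_zero, false_or, and_congr_right_iff]
  intro hdim
  rw [HIntVal, HIntNeg_eq_zero hF0, EReal.coe_ennreal_zero, sub_zero,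
    HIntPos_eq_setLIntegral hK hF, Hdim, hdim, ENNReal.toReal_zero,
    ← EReal.coe_ennreal_lt_coe_ennreal_iff, EReal.coe_ennreal_ofReal, max_eq_left hε]

lemma MemLH.of_toLex_dLH_lt (hK : MeasurableSet K) {f g : ℝ → ℝ} (hf : MemLH K f)
    (hg : Measurable g) {ε : ℝ} (hε : 0 ≤ ε)
    (hfg : toLex (dLH K f g) < toLex ((0 : ℝ≥0∞), (ε : EReal))) : MemLH K g := by
  obtain ⟨hdim, hint⟩ :=
    (toLex_HInt_lt_iff (F := fun x => |f x - g x|) hK (hf.1.sub hg).abs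
      (fun _ => abs_nonneg _) hε).1 hfg
  rw [HD_abs] at hdim
  have hdim_eq : Hdim K (fun x => |g x|) = Hdim K (fun x => |f x|) := by
    simp only [Hdim, HD_abs]
    refine le_antisymm (dimH_le_of_subset_union (HD_subset_union_HD_sub f g) hdim) ?_
    exact dimH_le_of_subset_union (HD_subset_union_HD_sub g f) (by rwa [HD_sub_comm])
  set d := Hdim K (fun x => |f x|)
  have hdiff : ∫⁻ x in K, ENNReal.ofReal |f x - g x| ∂μH[d.toReal] ≠ ⊤ := by
    rcases eq_or_ne d.toReal 0 with hd | hd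
    · rw [hd]
      exact (hint.trans ENNReal.ofReal_lt_top).ne
    · have hlt : dimH (HD K fun x => |f x - g x|) < d.toNNReal := by
        rw [HD_abs, hdim]
        exact ENNReal.coe_pos.2 (pos_iff_ne_zero.2 fun h => hd (by simp [ENNReal.toReal, h]))
      rw [show d.toReal = d.toNNReal from rfl,
        setLIntegral_hausdorffMeasure_eq_zero_of_dimH_lt (F := fun x => |f x - g x|) hK
          (hf.1.sub hg).abs hlt]
      exact ENNReal.zero_ne_top
  have hfin : ∫⁻ x in K, ENNReal.ofReal |f x| ∂μH[d.toReal] ≠ ⊤ := by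
    rw [← HIntPos_eq_setLIntegral hK hf.1.abs]
    exact hf.2.1
  refine ⟨hg, ?_, by rw [HIntNeg_eq_zero fun _ => abs_nonneg _]; exact ENNReal.zero_ne_top⟩
  rw [HIntPos_eq_setLIntegral hK hg.abs, hdim_eq]
  refine ne_top_of_le_ne_top (ENNReal.add_ne_top.2 ⟨hfin, hdiff⟩) ?_
  calc ∫⁻ x in K, ENNReal.ofReal |g x| ∂μH[d.toReal]
      ≤ ∫⁻ x in K, (ENNReal.ofReal |f x| + ENNReal.ofReal |f x - g x|) ∂μH[d.toReal] :=
        lintegral_mono fun x => (ENNReal.ofReal_le_ofReal (by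
          linarith [abs_sub_abs_le_abs_sub (g x) (f x), abs_sub_comm (g x) (f x)])).trans
          ENNReal.ofReal_add_le
    _ = _ := lintegral_add_left hf.1.abs.ennreal_ofReal _

lemma cauchySeq_apply_of_toLex_dLH_lt (hK : MeasurableSet K) {f : ℕ → ℝ → ℝ}
    (hf : ∀ n, Measurable (f n))
    (hcauchy : ∀ ε : ℝ, 0 < ε → ∃ N : ℕ, ∀ n m : ℕ, N < n → N < m →
      toLex (dLH K (f n) (f m)) < toLex ((0 : ℝ≥0∞), (ε : EReal)))
    {x : ℝ} (hx : x ∈ K) : CauchySeq (f · x) := by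
  rw [Metric.cauchySeq_iff]
  intro ε hε
  obtain ⟨N, hN⟩ := hcauchy ε hε
  refine ⟨N + 1, fun n hn m hm => ?_⟩
  have hint := ((toLex_HInt_lt_iff (F := fun x => |f n x - f m x|) hK ((hf n).sub (hf m)).abs
    (fun _ => abs_nonneg _) hε.le).1 (hN n m hn hm)).2
  have := (le_setLIntegral_hausdorffMeasure_zero hx _).trans_lt hint
  rwa [ENNReal.ofReal_lt_ofReal_iff hε, ← Real.dist_eq] at this

lemma HD_sub_subset_iUnion_of_tendsto {f : ℕ → ℝ → ℝ} {g h : ℝ → ℝ}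
    (hlim : ∀ x ∈ K, Tendsto (f · x) atTop (𝓝 (g x))) (N : ℕ) :
    HD K (fun x => h x - g x) ⊆ ⋃ m, ⋃ (_ : N < m), HD K (fun x => h x - f m x) := by
  rintro x ⟨hxK, hx⟩
  by_contra hnot
  simp only [Set.mem_iUnion, not_exists] at hnot
  have hconst : ∀ᶠ m in atTop, f m x = h x :=
    eventually_atTop.2 ⟨N + 1, fun m hm => by
      by_contra hne
      exact hnot m hm ⟨hxK, sub_ne_zero.2 (Ne.symm hne)⟩⟩
  exact hx (sub_eq_zero.2 (tendsto_nhds_unique tendsto_const_nhds ((hlim x hxK).congr' hconst)))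

lemma toLex_dLH_lt_of_tendsto (hK : MeasurableSet K) {f : ℕ → ℝ → ℝ} {g h : ℝ → ℝ}
    (hh : Measurable h) (hf : ∀ m, Measurable (f m)) (hg : Measurable g)
    (hlim : ∀ x ∈ K, Tendsto (f · x) atTop (𝓝 (g x))) {N : ℕ} {ε ε' : ℝ} (hε : 0 ≤ ε)
    (hεε' : ε < ε') (hN : ∀ m, N < m → toLex (dLH K h (f m)) < toLex ((0 : ℝ≥0∞), (ε : EReal))) :
    toLex (dLH K h g) < toLex ((0 : ℝ≥0∞), (ε' : EReal)) := by
  have hN' m (hm : N < m) :=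
    (toLex_HInt_lt_iff (F := fun x => |h x - f m x|) hK (hh.sub (hf m)).abs
      (fun _ => abs_nonneg _) hε).1 (hN m hm)
  refine (toLex_HInt_lt_iff (F := fun x => |h x - g x|) hK (hh.sub hg).abs
    (fun _ => abs_nonneg _) (hε.trans hεε'.le)).2 ⟨le_antisymm ?_ zero_le, ?_⟩
  · calc dimH (HD K fun x => |h x - g x|)
        ≤ dimH (⋃ m, ⋃ (_ : N < m), HD K (fun x => h x - f m x)) := by
          rw [HD_abs]; exact dimH_mono (HD_sub_subset_iUnion_of_tendsto hlim N)
      _ = 0 := by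
          simp only [dimH_iUnion]
          refine le_antisymm (iSup₂_le fun m hm => ?_) zero_le
          rw [← HD_abs, (hN' m hm).1]
  · calc ∫⁻ x in K, ENNReal.ofReal |h x - g x| ∂μH[0]
        ≤ ENNReal.ofReal ε :=
          setLIntegral_le_of_tendsto hK (fun m => (hh.sub (hf m)).abs.ennreal_ofReal)
            (fun x hx => ENNReal.tendsto_ofReal ((hlim x hx).const_sub (h x)).abs)
            (eventually_atTop.2 ⟨N + 1, fun m hm => (hN' m hm).2.le⟩)
      _ < ENNReal.ofReal ε' := (ENNReal.ofReal_lt_ofReal_iff (hε.trans_lt hεε')).2 hεε'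

end HausdorffIntegral

theorem LH_complete (K : Set ℝ) (hK : MeasurableSet K) (f : ℕ → ℝ → ℝ)
    (hf : ∀ n, MemLH K (f n))
    (hcauchy : ∀ ε : ℝ, 0 < ε → ∃ N : ℕ, ∀ n m : ℕ, N < n → N < m →
      toLex (dLH K (f n) (f m)) < toLex ((0 : ℝ≥0∞), (ε : EReal))) :
    ∃ g : ℝ → ℝ, MemLH K g ∧
      ∀ ε : ℝ, 0 < ε → ∃ N : ℕ, ∀ n : ℕ, N < n →
        toLex (dLH K (f n) g) < toLex ((0 : ℝ≥0∞), (ε : EReal)) := by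
  have hm n : Measurable (f n) := (hf n).1
  set g : ℝ → ℝ := fun x => limUnder atTop (f · x)
  have hg : Measurable g :=
    (StronglyMeasurable.limUnder fun n => (hm n).stronglyMeasurable).measurable
  have hlim : ∀ x ∈ K, Tendsto (f · x) atTop (𝓝 (g x)) := fun x hx =>
    (cauchySeq_apply_of_toLex_dLH_lt hK hm hcauchy hx).tendsto_limUnder
  have hclose : ∀ ε : ℝ, 0 < ε → ∃ N : ℕ, ∀ n : ℕ, N < n →
      toLex (dLH K (f n) g) < toLex ((0 : ℝ≥0∞), (ε : EReal)) := fun ε hε =>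
    (hcauchy (ε / 2) (half_pos hε)).imp fun _ hN n hn =>
      toLex_dLH_lt_of_tendsto hK (hm n) hm hg hlim (half_pos hε).le (half_lt_self hε)
        (hN n · hn)
  obtain ⟨N, hN⟩ := hclose 1 one_pos
  exact ⟨g, (hf (N + 1)).of_toLex_dLH_lt hK hg zero_le_one (hN (N + 1) N.lt_succ_self), hclose⟩
end
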